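/- arXiv:alg-geom/9611013 — 3 statements merged into one kernel-verified Lean document; each statement's English description precedes it below -/
import Mathlib

section
/- Let V be a finite-dimensional vector space over ℂ, let t : V → V be a diagonalizable linear map, and suppose that for each eigenvalue a of t with eigenspace V_a there is a scalar d_a ∈ ℂ such that the polynomial x² − a·x + d_a has two distinct roots. Then the linear endomorphism of V ⊕ V given in block form by T(f,g) = (t f + g, −D f), where D acts as d_a on V_a, is diagonalizable. -/
/-!
If `t v = a • v` and `D v = d • v`, the block operator sends `(v, (μ - a) • v)` to
`μ • (v, (μ - a) • v)` as soon as `μ² - a μ + d = 0`. Using both roots `α ≠ β` at every vector of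
the eigenbasis gives `2n` eigenvectors; they span `V × V` because
`(v, (α - a) • v) - (v, (β - a) • v) = (α - β) • (0, v)`, so by counting they form a basis.
-/

open Module Submodule

section PairBasis

variable {K V ι : Type*} [Field K] [AddCommGroup V] [Module K V]

noncomputable def pairFamily (b : Basis ι K V) (p q : ι → K) : ι ⊕ ι → V × V :=
  Sum.elim (fun i => (b i, p i • b i)) (fun i => (b i, q i • b i))

theorem span_pairFamily_eq_top (b : Basis ι K V) (p q : ι → K) (hpq : ∀ i, p i ≠ q i) :
    span K (Set.range (pairFamily b p q)) = ⊤ := by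
  set S := span K (Set.range (pairFamily b p q))
  have mem_inl : ∀ i, (b i, p i • b i) ∈ S := fun i => subset_span ⟨Sum.inl i, rfl⟩
  have mem_inr : ∀ i, (b i, q i • b i) ∈ S := fun i => subset_span ⟨Sum.inr i, rfl⟩
  have mem_snd : ∀ i, ((0 : V), b i) ∈ S := by
    intro i
    have hsub : ((0 : V), b i) = (p i - q i)⁻¹ • ((b i, p i • b i) - (b i, q i • b i)) := by
      rw [Prod.mk_sub_mk, sub_self, ← sub_smul, Prod.smul_mk, smul_zero, smul_smul,
        inv_mul_cancel₀ (sub_ne_zero.mpr (hpq i)), one_smul]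
    rw [hsub]
    exact S.smul_mem _ (S.sub_mem (mem_inl i) (mem_inr i))
  have mem_fst : ∀ i, (b i, (0 : V)) ∈ S := by
    intro i
    have hsub : (b i, (0 : V)) = (b i, p i • b i) - p i • ((0 : V), b i) := by simp
    rw [hsub]
    exact S.sub_mem (mem_inl i) (S.smul_mem _ (mem_snd i))
  refine eq_top_iff.mpr ?_
  rw [← (b.prod b).span_eq, span_le]
  rintro _ ⟨i | i, rfl⟩
  · simpa [Basis.prod_apply] using mem_fst i
  · simpa [Basis.prod_apply] using mem_snd i

variable [Fintype ι]

noncomputable def pairBasis (b : Basis ι K V) (p q : ι → K) (hpq : ∀ i, p i ≠ q i) :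
    Basis (ι ⊕ ι) K (V × V) :=
  basisOfTopLeSpanOfCardEqFinrank (pairFamily b p q) (span_pairFamily_eq_top b p q hpq).ge
    (finrank_eq_card_basis (b.prod b)).symm

@[simp]
theorem coe_pairBasis (b : Basis ι K V) (p q : ι → K) (hpq : ∀ i, p i ≠ q i) :
    ⇑(pairBasis b p q hpq) = pairFamily b p q :=
  coe_basisOfTopLeSpanOfCardEqFinrank _ _ _

end PairBasis

section BlockOperator

variable {K V : Type*} [CommRing K] [AddCommGroup V] [Module K V]

def blockOperator (t D : V →ₗ[K] V) : V × V →ₗ[K] V × V :=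
  LinearMap.prod (t ∘ₗ LinearMap.fst K V V + LinearMap.snd K V V) (-(D ∘ₗ LinearMap.fst K V V))

theorem blockOperator_apply_eq_smul {t D : V →ₗ[K] V} {v : V} {a d μ : K}
    (ht : t v = a • v) (hD : D v = d • v) (hμ : μ ^ 2 - a * μ + d = 0) :
    blockOperator t D (v, (μ - a) • v) = μ • (v, (μ - a) • v) := by
  have hd : -d = μ * (μ - a) := by linear_combination -hμ
  ext
  · simp [blockOperator, ht, ← add_smul]
  · simp [blockOperator, hD, smul_smul, ← neg_smul, hd]

end BlockOperator

theorem block_operator_diagonalizable_general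
    (V : Type*) [AddCommGroup V] [Module ℂ V]
    (t D : V →ₗ[ℂ] V) (n : ℕ) (b : Module.Basis (Fin n) ℂ V)
    (h : ∀ i, ∃ a d : ℂ, t (b i) = a • b i ∧ D (b i) = d • b i ∧
      ∃ α β : ℂ, α ≠ β ∧ ∀ x : ℂ, x ^ 2 - a * x + d = (x - α) * (x - β)) :
    ∃ (m : ℕ) (c : Module.Basis (Fin m) ℂ (V × V)), ∀ i, ∃ μ : ℂ,
      (LinearMap.prod (t ∘ₗ LinearMap.fst ℂ V V + LinearMap.snd ℂ V V)
        (-(D ∘ₗ LinearMap.fst ℂ V V))) (c i) = μ • c i := by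
  choose a d ht hD α β hne hroot using h
  have hne' : ∀ i, α i - a i ≠ β i - a i := fun i => by simpa using hne i
  refine ⟨n + n, (pairBasis b _ _ hne').reindex finSumFinEquiv, fun k => ?_⟩
  rw [Basis.reindex_apply, coe_pairBasis]
  rcases finSumFinEquiv.symm k with i | i
  · exact ⟨α i, blockOperator_apply_eq_smul (ht i) (hD i) (by simpa using hroot i (α i))⟩
  · exact ⟨β i, blockOperator_apply_eq_smul (ht i) (hD i) (by simpa using hroot i (β i))⟩

/-- If `t` is diagonalizable, `D` acts as a scalar `d_a` on each eigenspace `V_a` of `t`,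
and each polynomial `x² - a x + d_a` has two distinct roots, then the block operator
`(f, g) ↦ (t f + g, -D f)` on `V ⊕ V` is diagonalizable. -/
theorem block_operator_diagonalizable
    (V : Type*) [AddCommGroup V] [Module ℂ V] [FiniteDimensional ℂ V]
    (t D : V →ₗ[ℂ] V) (n : ℕ) (b : Module.Basis (Fin n) ℂ V)
    (h : ∀ i, ∃ a d : ℂ, t (b i) = a • b i ∧ D (b i) = d • b i ∧
      ∃ α β : ℂ, α ≠ β ∧ ∀ x : ℂ, x ^ 2 - a * x + d = (x - α) * (x - β)) :
    ∃ (m : ℕ) (c : Module.Basis (Fin m) ℂ (V × V)), ∀ i, ∃ μ : ℂ,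
      (LinearMap.prod (t ∘ₗ LinearMap.fst ℂ V V + LinearMap.snd ℂ V V)
        (-(D ∘ₗ LinearMap.fst ℂ V V))) (c i) = μ • c i :=
  block_operator_diagonalizable_general V t D n b h
end

section
/- Let V be a finite-dimensional ℂ-vector space with a diagonalizable endomorphism t with eigenspace decomposition V = ⊕ V_a, and let D act as a scalar d_a on each V_a. Suppose for each eigenvalue a the polynomial x·(x² − a·x + d_a) has three distinct roots (in particular d_a ≠ 0 and x² − a x + d_a has distinct nonzero roots). Then the endomorphism of V ⊕ V ⊕ V given in block form by ((t,1,0),(−D,0,1),(0,0,0)) is diagonalizable. -/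
/-!
On the span of `(v, 0, 0)`, `(0, v, 0)`, `(0, 0, v)` for an eigenvector `v` of `t` and `D`
with eigenvalues `α + β` and `α β`, the block operator acts through the companion matrix of
`x (x - α) (x - β)`. Its eigenvectors `(v, -β v, 0)`, `(v, -α v, 0)` and `(v, -(α + β) v, α β v)`
(eigenvalues `α`, `β`, `0`) span that subspace as soon as `α ≠ β` and `α β ≠ 0`. Doing this
for every vector of an eigenbasis of `V` gives `3 n = dim (V × V × V)` eigenvectors spanning
everything, hence an eigenbasis.
-/

open Module Submodule

theorem vieta_of_forall_sq_sub_mul_add_eq {R : Type*} [CommRing R] {a d α β : R}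
    (h : ∀ x : R, x ^ 2 - a * x + d = (x - α) * (x - β)) : a = α + β ∧ d = α * β := by
  have h0 := h 0
  have h1 := h 1
  constructor
  · linear_combination h0 - h1
  · linear_combination h0

theorem exists_basis_fin_eigenvectors_of_top_le_span {K M ι : Type*} [Field K] [AddCommGroup M]
    [Module K M] [Fintype ι] (f : End K M) (w : ι → M) (hw : ∀ i, ∃ μ : K, f (w i) = μ • w i)
    (hspan : ⊤ ≤ span K (Set.range w)) (hcard : Fintype.card ι = finrank K M) :
    ∃ (m : ℕ) (c : Basis (Fin m) K M), ∀ i, ∃ μ : K, f (c i) = μ • c i := by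
  let c := (basisOfTopLeSpanOfCardEqFinrank w hspan hcard).reindex (Fintype.equivFin ι)
  refine ⟨_, c, fun i => ?_⟩
  simpa [c] using hw _

namespace BlockOperator

variable {K M : Type*}

section CommRing

variable [CommRing K] [AddCommGroup M] [Module K M]

def blockOp (t D : End K M) : End K (M × M × M) :=
  LinearMap.prod
    (t ∘ₗ LinearMap.fst K M (M × M) + LinearMap.fst K M M ∘ₗ LinearMap.snd K M (M × M))
    (LinearMap.prod
      (-(D ∘ₗ LinearMap.fst K M (M × M)) + LinearMap.snd K M M ∘ₗ LinearMap.snd K M (M × M)) 0)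

@[simp]
theorem blockOp_apply (t D : End K M) (f g h : M) :
    blockOp t D (f, g, h) = (t f + g, -D f + h, 0) :=
  rfl

def eigenTriple (v : M) (α β : K) : Fin 3 → M × M × M :=
  ![(v, -β • v, 0), (v, -α • v, 0), (v, -(α + β) • v, (α * β) • v)]

theorem blockOp_eigenTriple {t D : End K M} {v : M} {α β : K}
    (ht : t v = (α + β) • v) (hD : D v = (α * β) • v) (k : Fin 3) :
    blockOp t D (eigenTriple v α β k) = ![α, β, 0] k • eigenTriple v α β k := by
  fin_cases k <;> ext <;> simp [eigenTriple, ht, hD] <;> module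

end CommRing

section Field

variable [Field K] [AddCommGroup M] [Module K M]

theorem coordinates_mem_of_eigenTriple_mem {S : Submodule K (M × M × M)} {v : M} {α β : K}
    (hαβ : α ≠ β) (hα : α ≠ 0) (hβ : β ≠ 0) (mem : ∀ k, eigenTriple v α β k ∈ S) :
    ((v, 0, 0) : M × M × M) ∈ S ∧ ((0, v, 0) : M × M × M) ∈ S ∧ ((0, 0, v) : M × M × M) ∈ S := by
  have h₂ : (α - β) • ((0, v, 0) : M × M × M) = eigenTriple v α β 0 - eigenTriple v α β 1 := by
    simp [eigenTriple, Prod.ext_iff]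
    module
  have h₂S : ((0, v, 0) : M × M × M) ∈ S :=
    (S.smul_mem_iff (sub_ne_zero.mpr hαβ)).mp (h₂ ▸ S.sub_mem (mem 0) (mem 1))
  have h₁ : ((v, 0, 0) : M × M × M) = eigenTriple v α β 0 + β • ((0, v, 0) : M × M × M) := by
    simp [eigenTriple]
  have h₁S : ((v, 0, 0) : M × M × M) ∈ S := h₁ ▸ S.add_mem (mem 0) (S.smul_mem _ h₂S)
  have h₃ : (α * β) • ((0, 0, v) : M × M × M) =
      eigenTriple v α β 2 - (v, 0, 0) + (α + β) • ((0, v, 0) : M × M × M) := by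
    simp [eigenTriple, Prod.ext_iff]
    module
  have h₃S : ((0, 0, v) : M × M × M) ∈ S :=
    (S.smul_mem_iff (mul_ne_zero hα hβ)).mp
      (h₃ ▸ S.add_mem (S.sub_mem (mem 2) h₁S) (S.smul_mem _ h₂S))
  exact ⟨h₁S, h₂S, h₃S⟩

theorem top_le_span_eigenTriple {ι : Type*} (b : Basis ι K M) {α β : ι → K}
    (hαβ : ∀ i, α i ≠ β i) (hα : ∀ i, α i ≠ 0) (hβ : ∀ i, β i ≠ 0) :
    ⊤ ≤ span K (Set.range fun p : ι × Fin 3 => eigenTriple (b p.1) (α p.1) (β p.1) p.2) := by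
  set S := span K (Set.range fun p : ι × Fin 3 => eigenTriple (b p.1) (α p.1) (β p.1) p.2)
  have hcoord (i : ι) := coordinates_mem_of_eigenTriple_mem (S := S) (hαβ i) (hα i) (hβ i)
    fun k => subset_span ⟨(i, k), rfl⟩
  rw [← (b.prod (b.prod b)).span_eq, span_le]
  rintro _ ⟨i | i | i, rfl⟩ <;>
    simp only [Basis.prod_apply, Sum.elim_inl, Sum.elim_inr, Function.comp_apply,
      LinearMap.inl_apply, LinearMap.inr_apply, SetLike.mem_coe]
  exacts [(hcoord i).1, (hcoord i).2.1, (hcoord i).2.2]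

end Field

end BlockOperator

open BlockOperator

theorem block_operator_diagonalizable_three_general
    (V : Type*) [AddCommGroup V] [Module ℂ V]
    (t D : V →ₗ[ℂ] V) (n : ℕ) (b : Module.Basis (Fin n) ℂ V)
    (h : ∀ i, ∃ a d : ℂ, t (b i) = a • b i ∧ D (b i) = d • b i ∧
      ∃ α β : ℂ, α ≠ β ∧ α ≠ 0 ∧ β ≠ 0 ∧
        ∀ x : ℂ, x ^ 2 - a * x + d = (x - α) * (x - β)) :
    ∃ (m : ℕ) (c : Module.Basis (Fin m) ℂ (V × V × V)), ∀ i, ∃ μ : ℂ,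
      (LinearMap.prod
        (t ∘ₗ LinearMap.fst ℂ V (V × V) + LinearMap.fst ℂ V V ∘ₗ LinearMap.snd ℂ V (V × V))
        (LinearMap.prod
          (-(D ∘ₗ LinearMap.fst ℂ V (V × V)) + LinearMap.snd ℂ V V ∘ₗ LinearMap.snd ℂ V (V × V))
          0)) (c i) = μ • c i := by
  choose a d ht hD α β hαβ hα hβ hpoly using h
  have hvieta (i : Fin n) := vieta_of_forall_sq_sub_mul_add_eq (hpoly i)
  have : Module.Finite ℂ V := .of_basis b
  refine exists_basis_fin_eigenvectors_of_top_le_span (blockOp t D) _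
    (fun p => ⟨_, blockOp_eigenTriple ((hvieta p.1).1 ▸ ht p.1) ((hvieta p.1).2 ▸ hD p.1) p.2⟩)
    (top_le_span_eigenTriple b hαβ hα hβ) ?_
  simp [finrank_prod, finrank_eq_card_basis b]
  ring

/-- If `t` is diagonalizable, `D` acts as a scalar `d_a` on each eigenspace `V_a` of `t`,
and each polynomial `x (x² - a x + d_a)` has three distinct roots, then the block operator
`(f, g, h) ↦ (t f + g, -D f + h, 0)` on `V ⊕ V ⊕ V` is diagonalizable. -/
theorem block_operator_diagonalizable_three
    (V : Type*) [AddCommGroup V] [Module ℂ V] [FiniteDimensional ℂ V]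
    (t D : V →ₗ[ℂ] V) (n : ℕ) (b : Module.Basis (Fin n) ℂ V)
    (h : ∀ i, ∃ a d : ℂ, t (b i) = a • b i ∧ D (b i) = d • b i ∧
      ∃ α β : ℂ, α ≠ β ∧ α ≠ 0 ∧ β ≠ 0 ∧
        ∀ x : ℂ, x ^ 2 - a * x + d = (x - α) * (x - β)) :
    ∃ (m : ℕ) (c : Module.Basis (Fin m) ℂ (V × V × V)), ∀ i, ∃ μ : ℂ,
      (LinearMap.prod
        (t ∘ₗ LinearMap.fst ℂ V (V × V) + LinearMap.fst ℂ V V ∘ₗ LinearMap.snd ℂ V (V × V))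
        (LinearMap.prod
          (-(D ∘ₗ LinearMap.fst ℂ V (V × V)) + LinearMap.snd ℂ V V ∘ₗ LinearMap.snd ℂ V (V × V))
          0)) (c i) = μ • c i :=
  block_operator_diagonalizable_three_general V t D n b h
end

section
/- Let M be a free module of rank 2 over a commutative ring R (a finite product of fields), φ an R-linear endomorphism of M with characteristic polynomial x² − a·x + d, and suppose λ ∈ R is a double root of this polynomial. If φ satisfies a polynomial identity P(φ) = 0 with P ∈ R[x] having simple roots whose pairwise differences are units, then φ = λ·id_M. -/
open Polynomial

/-!
By Cayley–Hamilton `N := φ - λ` satisfies `N² = 0`, so Taylor expansion turns `P(φ) = 0` into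
`P(λ) + P'(λ) N = 0`. Multiplying by `N` gives `P(λ) N = 0`, and a Bézout relation
`u P + v P' = 1` (separability of `P`) then shows that `N = -v(λ) P(λ)` is a scalar. A scalar of
square zero vanishes: the ring is reduced and acts faithfully on the nonzero free module `M`.
-/

instance Module.End.faithfulSMul {R M : Type*} [CommSemiring R] [AddCommMonoid M] [Module R M]
    [FaithfulSMul R M] : FaithfulSMul R (Module.End R M) :=
  ⟨fun h => eq_of_smul_eq_smul fun m => by simpa using LinearMap.congr_fun (h 1) m⟩

namespace Polynomial

variable {R A : Type*} [CommRing R] [Ring A] [Algebra R A]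

theorem aeval_algebraMap_add_of_sq_eq_zero (p : R[X]) (r : R) {N : A} (hN : N ^ 2 = 0) :
    aeval (algebraMap R A r + N) p =
      algebraMap R A (p.eval r) + algebraMap R A (p.derivative.eval r) * N := by
  -- Reduce to the commutative case inside the subalgebra generated by `N`.
  let y : Algebra.adjoin R {N} := ⟨N, Algebra.self_mem_adjoin_singleton R N⟩
  have hy : y ^ 2 = 0 := Subtype.ext hN
  have := congrArg Subtype.val (aeval_add_of_sq_eq_zero p (algebraMap R _ r) y hy)
  simpa [aeval_subalgebra_coe, aeval_algebraMap_apply] using this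

theorem exists_algebraMap_eq_of_sq_eq_zero {p : R[X]} (hp : p.Separable) {r : R} {N : A}
    (hN : N ^ 2 = 0) (h : aeval (algebraMap R A r + N) p = 0) : ∃ μ, algebraMap R A μ = N := by
  obtain ⟨u, v, huv⟩ := hp
  set e₀ := p.eval r
  set e₁ := p.derivative.eval r
  have hbezout : u.eval r * e₀ + v.eval r * e₁ = 1 := by
    simpa using congrArg (eval r) huv
  have hlin : algebraMap R A e₀ + algebraMap R A e₁ * N = 0 := by
    rwa [aeval_algebraMap_add_of_sq_eq_zero p r hN] at h
  have hkill : algebraMap R A e₀ * N = 0 := by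
    have := congrArg (· * N) hlin
    simpa [add_mul, mul_assoc, ← sq, hN] using this
  refine ⟨-(v.eval r * e₀), ?_⟩
  calc algebraMap R A (-(v.eval r * e₀))
      = algebraMap R A (v.eval r) * (algebraMap R A e₁ * N) := by
        rw [eq_neg_of_add_eq_zero_right hlin, map_neg, map_mul, mul_neg]
    _ = algebraMap R A (u.eval r * e₀ + v.eval r * e₁) * N := by
        rw [map_add, map_mul, map_mul, add_mul, mul_assoc, hkill, mul_zero, zero_add, mul_assoc]
    _ = N := by rw [hbezout, map_one, one_mul]

theorem eq_zero_of_sq_eq_zero_of_aeval_eq_zero [IsReduced R] [FaithfulSMul R A] {p : R[X]}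
    (hp : p.Separable) {r : R} {N : A} (hN : N ^ 2 = 0)
    (h : aeval (algebraMap R A r + N) p = 0) : N = 0 := by
  obtain ⟨μ, rfl⟩ := exists_algebraMap_eq_of_sq_eq_zero hp hN h
  have hμ : μ ^ 2 = 0 := FaithfulSMul.algebraMap_injective R A (by simpa using hN)
  rw [IsReduced.eq_zero μ ⟨2, hμ⟩, map_zero]

end Polynomial

theorem char_poly_double_root_semisimple_scalar_general
    (ι : Type*) (K : ι → Type*) [∀ i, Field (K i)]
    (M : Type*) [AddCommGroup M] [Module (∀ i, K i) M]
    [Module.Free (∀ i, K i) M] [Module.Finite (∀ i, K i) M]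
    (φ : Module.End (∀ i, K i) M) (a d lam : ∀ i, K i)
    (hcharpoly : LinearMap.charpoly φ = X ^ 2 - C a * X + C d)
    (hdouble : (X : Polynomial (∀ i, K i)) ^ 2 - C a * X + C d = (X - C lam) ^ 2)
    (s : Finset (∀ i, K i)) (c : (∀ i, K i) → (∀ i, K i))
    (hdist : ∀ x ∈ s, ∀ y ∈ s, x ≠ y → IsUnit (c x - c y))
    (hP : Polynomial.aeval φ (∏ x ∈ s, (X - C (c x))) = 0) :
    φ = lam • (1 : Module.End (∀ i, K i) M) := by
  rcases subsingleton_or_nontrivial M with hM | hM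
  · exact Subsingleton.elim _ _
  set N := φ - algebraMap _ _ lam
  have hN : N ^ 2 = 0 := by
    simpa [hcharpoly, hdouble] using LinearMap.aeval_self_charpoly φ
  have hsep : (∏ x ∈ s, (X - C (c x))).Separable :=
    separable_prod' (fun x hx y hy hxy => isCoprime_X_sub_C_of_isUnit_sub (hdist x hx y hy hxy))
      fun x _ => separable_X_sub_C
  have hN0 : N = 0 :=
    eq_zero_of_sq_eq_zero_of_aeval_eq_zero hsep hN (by rwa [add_sub_cancel])
  rw [← Algebra.algebraMap_eq_smul_one, ← sub_eq_zero, ← hN0]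

/-- `M` is free of rank 2 over a finite product of fields `R`, `φ` an endomorphism with
characteristic polynomial `x² - a x + d = (x - λ)²`.  If `φ` is annihilated by a
polynomial with simple roots whose pairwise differences are units, then `φ = λ • id`. -/
theorem char_poly_double_root_semisimple_scalar
    (ι : Type*) [Fintype ι] (K : ι → Type*) [∀ i, Field (K i)]
    (M : Type*) [AddCommGroup M] [Module (∀ i, K i) M]
    [Module.Free (∀ i, K i) M] [Module.Finite (∀ i, K i) M]
    (hrank : Module.rank (∀ i, K i) M = 2)
    (φ : Module.End (∀ i, K i) M) (a d lam : ∀ i, K i)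
    (hcharpoly : LinearMap.charpoly φ = X ^ 2 - C a * X + C d)
    (hdouble : (X : Polynomial (∀ i, K i)) ^ 2 - C a * X + C d = (X - C lam) ^ 2)
    (s : Finset (∀ i, K i)) (c : (∀ i, K i) → (∀ i, K i))
    (hdist : ∀ x ∈ s, ∀ y ∈ s, x ≠ y → IsUnit (c x - c y))
    (hP : Polynomial.aeval φ (∏ x ∈ s, (X - C (c x))) = 0) :
    φ = lam • (1 : Module.End (∀ i, K i) M) :=
  char_poly_double_root_semisimple_scalar_general ι K M φ a d lam hcharpoly hdouble s c hdist hP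
end
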